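/- arXiv:0905.3372 — 5 statements merged into one kernel-verified Lean document; each statement's English description precedes it below -/
import Mathlib

section
/- Let k ≥ 1 and let χ_k ∈ (0,1) be the geometric constant defined by Leb^k(B_s(x₁) ∩ B_s(x₂)) = χ_k · Leb^k(B_s(0)) for all x₁, x₂ ∈ ℝ^k with |x₁ − x₂| = s > 0. Let E be a metric space, e₀ ∈ E, N ≥ 0 and r₀ > 0. Let B ⊆ ℝ^k and f : B → E be a map satisfying d(f(x), e₀) ≤ N for every x ∈ B, and such that for every x ∈ B and every r ∈ (0, r₀): Leb^k({y ∈ B_r(x) : y ∉ B, or y ∈ B and d(f(y), f(x)) > (N+1)·r}) < (χ_k/2) · Leb^k(B_r(x)). Then f is Lipschitz on B, with Lipschitz constant at most max(2(N+1), 2N/r₀). -/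
/-!
Fix `x₁ ≠ x₂` in `B` at distance `s`. If `s < r₀`, the two exceptional sets at scale `s` have
total measure below `χ_k · Leb(B_s)`, which is exactly the measure of the lens
`B_s(x₁) ∩ B_s(x₂)`; so some `y` of the lens is good for both points, and the triangle inequality
through `f y` gives `d(f x₁, f x₂) ≤ 2(N+1)s`. If `s ≥ r₀`, boundedness alone gives
`d(f x₁, f x₂) ≤ 2N ≤ (2N/r₀)s`.
-/

open MeasureTheory Metric Set

/-- The geometric constant `χ_k` defined by
`Leb^k(B_s(x₁) ∩ B_s(x₂)) = χ_k · Leb^k(B_s(0))` whenever `|x₁ - x₂| = s > 0`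
(well defined by translation and scaling invariance of Lebesgue measure; here we take
`s = 1`, `x₁ = 0`, `x₂` a unit coordinate vector). -/
noncomputable def chi (k : ℕ) (hk : 1 ≤ k) : ℝ :=
  (volume (ball (0 : EuclideanSpace ℝ (Fin k)) 1 ∩
      ball (EuclideanSpace.single (⟨0, hk⟩ : Fin k) (1 : ℝ)) 1)).toReal /
    (volume (ball (0 : EuclideanSpace ℝ (Fin k)) 1)).toReal

open scoped Pointwise

/-- The map `z ↦ ρ (z - x₁) + y₁`, with `ρ` the reflection taking `x₂ - x₁` to `y₂ - y₁`, is a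
measure-preserving isometry sending `x₁ ↦ y₁` and `x₂ ↦ y₂`. -/
theorem volume_ball_inter_ball_eq_of_dist_eq {V : Type*} [NormedAddCommGroup V]
    [InnerProductSpace ℝ V] [FiniteDimensional ℝ V] [MeasurableSpace V] [BorelSpace V]
    {x₁ x₂ y₁ y₂ : V} (h : dist x₁ x₂ = dist y₁ y₂) (r : ℝ) :
    volume (ball x₁ r ∩ ball x₂ r) = volume (ball y₁ r ∩ ball y₂ r) := by
  have hnorm : ‖x₂ - x₁‖ = ‖y₂ - y₁‖ := by
    rwa [← dist_eq_norm, ← dist_eq_norm, dist_comm, dist_comm y₂]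
  set ρ := Submodule.reflection (ℝ ∙ (x₂ - x₁ - (y₂ - y₁)))ᗮ
  set φ : V → V := fun z ↦ ρ (z - x₁) + y₁ with hφ
  have hφ_mp : MeasurePreserving φ :=
    (measurePreserving_add_right volume y₁).comp
      (ρ.measurePreserving.comp (measurePreserving_sub_right volume x₁))
  have hφ_iso : Isometry φ :=
    (IsometryEquiv.addRight y₁).isometry.comp
      (ρ.isometry.comp (IsometryEquiv.subRight x₁).isometry)
  have hφ₁ : φ x₁ = y₁ := by simp [hφ]
  have hφ₂ : φ x₂ = y₂ := by
    change ρ (x₂ - x₁) + y₁ = y₂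
    rw [Submodule.reflection_sub hnorm, sub_add_cancel]
  calc volume (ball x₁ r ∩ ball x₂ r) = volume (φ ⁻¹' (ball (φ x₁) r ∩ ball (φ x₂) r)) := by
        rw [preimage_inter, hφ_iso.preimage_ball, hφ_iso.preimage_ball]
    _ = volume (ball y₁ r ∩ ball y₂ r) := by
        rw [hφ_mp.measure_preimage (isOpen_ball.inter isOpen_ball).measurableSet.nullMeasurableSet,
          hφ₁, hφ₂]

theorem ofReal_chi_mul_volume_ball {k : ℕ} (hk : 1 ≤ k) :
    ENNReal.ofReal (chi k hk) * volume (ball (0 : EuclideanSpace ℝ (Fin k)) 1) =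
      volume (ball (0 : EuclideanSpace ℝ (Fin k)) 1 ∩
        ball (EuclideanSpace.single (⟨0, hk⟩ : Fin k) (1 : ℝ)) 1) := by
  have : Nonempty (Fin k) := ⟨⟨0, hk⟩⟩
  have hpos : volume (ball (0 : EuclideanSpace ℝ (Fin k)) 1) ≠ 0 :=
    (measure_ball_pos _ _ one_pos).ne'
  have hfin : volume (ball (0 : EuclideanSpace ℝ (Fin k)) 1) ≠ ⊤ := measure_ball_lt_top.ne
  rw [chi, ENNReal.ofReal_div_of_pos (ENNReal.toReal_pos hpos hfin), ENNReal.ofReal_toReal hfin,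
    ENNReal.ofReal_toReal (measure_ne_top_of_subset inter_subset_left hfin),
    ENNReal.div_mul_cancel hpos hfin]

theorem volume_ball_inter_ball_of_dist_eq {k : ℕ} (hk : 1 ≤ k) {x₁ x₂ : EuclideanSpace ℝ (Fin k)}
    {s : ℝ} (hs : 0 < s) (hd : dist x₁ x₂ = s) :
    volume (ball x₁ s ∩ ball x₂ s) = ENNReal.ofReal (chi k hk) * volume (ball x₁ s) := by
  have : Nonempty (Fin k) := ⟨⟨0, hk⟩⟩
  set e : EuclideanSpace ℝ (Fin k) := EuclideanSpace.single (⟨0, hk⟩ : Fin k) (1 : ℝ)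
  have hde : dist (0 : EuclideanSpace ℝ (Fin k)) (s • e) = s := by
    rw [dist_zero_left, norm_smul, PiLp.norm_single, norm_one, mul_one, Real.norm_of_nonneg hs.le]
  have hlens :
      ball (0 : EuclideanSpace ℝ (Fin k)) s ∩ ball (s • e) s = s • (ball 0 1 ∩ ball e 1) := by
    rw [smul_set_inter₀ hs.ne', _root_.smul_ball hs.ne', _root_.smul_ball hs.ne', smul_zero,
      Real.norm_of_nonneg hs.le, mul_one]
  rw [volume_ball_inter_ball_eq_of_dist_eq (hd.trans hde.symm), hlens, Measure.addHaar_smul,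
    ← ofReal_chi_mul_volume_ball, Measure.addHaar_ball _ _ hs.le, finrank_euclideanSpace_fin,
    abs_of_pos (pow_pos hs k)]
  ring

theorem exists_mem_notMem_notMem_of_measure_add_lt {α : Type*} [MeasurableSpace α]
    {μ : Measure α} {S A₁ A₂ : Set α} (h : μ A₁ + μ A₂ < μ S) : ∃ y ∈ S, y ∉ A₁ ∧ y ∉ A₂ := by
  by_contra! hcover
  have hsub : S ⊆ A₁ ∪ A₂ := fun y hy ↦ (em (y ∈ A₁)).imp_right (hcover y hy)
  exact (measure_mono hsub |>.trans (measure_union_le A₁ A₂)).not_gt h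

section BadSet

variable {X E : Type*} [PseudoMetricSpace X] [PseudoMetricSpace E]

def badSet (B : Set X) (f : X → E) (L : ℝ) (x : X) (r : ℝ) : Set X :=
  {y ∈ ball x r | y ∉ B ∨ (y ∈ B ∧ L * r < dist (f y) (f x))}

theorem dist_le_of_mem_ball_of_notMem_badSet {B : Set X} {f : X → E} {L r : ℝ} {x y : X}
    (hy : y ∈ ball x r) (hgood : y ∉ badSet B f L x r) : dist (f y) (f x) ≤ L * r := by
  by_contra! hfar
  exact hgood ⟨hy, (em (y ∈ B)).symm.imp_right fun hB ↦ ⟨hB, hfar⟩⟩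

theorem dist_le_of_measure_badSet_add_lt [MeasurableSpace X] {μ : Measure X} {B : Set X}
    {f : X → E} {L : ℝ} {x₁ x₂ : X}
    (h : μ (badSet B f L x₁ (dist x₁ x₂)) + μ (badSet B f L x₂ (dist x₁ x₂)) <
      μ (ball x₁ (dist x₁ x₂) ∩ ball x₂ (dist x₁ x₂))) :
    dist (f x₁) (f x₂) ≤ 2 * L * dist x₁ x₂ := by
  obtain ⟨y, ⟨hy₁, hy₂⟩, hgood₁, hgood₂⟩ := exists_mem_notMem_notMem_of_measure_add_lt h
  calc dist (f x₁) (f x₂) ≤ dist (f y) (f x₁) + dist (f y) (f x₂) := dist_triangle_left _ _ _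
    _ ≤ L * dist x₁ x₂ + L * dist x₁ x₂ :=
        add_le_add (dist_le_of_mem_ball_of_notMem_badSet hy₁ hgood₁)
          (dist_le_of_mem_ball_of_notMem_badSet hy₂ hgood₂)
    _ = 2 * L * dist x₁ x₂ := by ring

end BadSet

theorem dist_le_of_volume_badSet_lt_chi {k : ℕ} (hk : 1 ≤ k) {E : Type*} [PseudoMetricSpace E]
    {B : Set (EuclideanSpace ℝ (Fin k))} {f : EuclideanSpace ℝ (Fin k) → E} {L : ℝ}
    {x₁ x₂ : EuclideanSpace ℝ (Fin k)} (hpos : 0 < dist x₁ x₂)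
    (h₁ : volume (badSet B f L x₁ (dist x₁ x₂)) <
      ENNReal.ofReal (chi k hk / 2) * volume (ball x₁ (dist x₁ x₂)))
    (h₂ : volume (badSet B f L x₂ (dist x₁ x₂)) <
      ENNReal.ofReal (chi k hk / 2) * volume (ball x₂ (dist x₁ x₂))) :
    dist (f x₁) (f x₂) ≤ 2 * L * dist x₁ x₂ := by
  refine dist_le_of_measure_badSet_add_lt ((ENNReal.add_lt_add h₁ h₂).trans_eq ?_)
  have hchi : 0 ≤ chi k hk / 2 := by unfold chi; positivity
  rw [volume_ball_inter_ball_of_dist_eq hk hpos rfl, Measure.addHaar_ball_center volume x₂,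
    ← Measure.addHaar_ball_center volume x₁, ← add_mul, ← ENNReal.ofReal_add hchi hchi, add_halves]

theorem dist_le_div_mul_of_le {E : Type*} [PseudoMetricSpace E] {a b e₀ : E} {N r₀ t : ℝ}
    (ha : dist a e₀ ≤ N) (hb : dist b e₀ ≤ N) (hr₀ : 0 < r₀) (ht : r₀ ≤ t) :
    dist a b ≤ 2 * N / r₀ * t := by
  have hN : 0 ≤ N := dist_nonneg.trans ha
  calc dist a b ≤ dist a e₀ + dist b e₀ := dist_triangle_right _ _ _
    _ ≤ 2 * N / r₀ * r₀ := by rw [div_mul_cancel₀ _ hr₀.ne']; linarith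
    _ ≤ 2 * N / r₀ * t := by gcongr

theorem lipschitz_of_egorov_bound_general {E : Type*} [MetricSpace E]
    (k : ℕ) (hk : 1 ≤ k) (e₀ : E) (N r₀ : ℝ) (hr₀ : 0 < r₀)
    (B : Set (EuclideanSpace ℝ (Fin k))) (f : EuclideanSpace ℝ (Fin k) → E)
    (hbd : ∀ x ∈ B, dist (f x) e₀ ≤ N)
    (hsmall : ∀ x ∈ B, ∀ r ∈ Ioo (0 : ℝ) r₀,
      volume {y ∈ ball x r | y ∉ B ∨ (y ∈ B ∧ (N + 1) * r < dist (f y) (f x))} <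
        ENNReal.ofReal (chi k hk / 2) * volume (ball x r)) :
    ∀ x₁ ∈ B, ∀ x₂ ∈ B,
      dist (f x₁) (f x₂) ≤ max (2 * (N + 1)) (2 * N / r₀) * dist x₁ x₂ := by
  intro x₁ h₁ x₂ h₂
  rcases (dist_nonneg (x := x₁) (y := x₂)).eq_or_lt with hzero | hpos
  · rw [dist_eq_zero.1 hzero.symm, dist_self, dist_self, mul_zero]
  rcases le_or_gt r₀ (dist x₁ x₂) with hfar | hnear
  · exact (dist_le_div_mul_of_le (hbd x₁ h₁) (hbd x₂ h₂) hr₀ hfar).trans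
      (by gcongr; exact le_max_right _ _)
  · exact (dist_le_of_volume_badSet_lt_chi hk hpos (hsmall x₁ h₁ _ ⟨hpos, hnear⟩)
      (hsmall x₂ h₂ _ ⟨hpos, hnear⟩)).trans (by gcongr; exact le_max_left _ _)

/-- if `f : B → E` is bounded by `N` around `e₀` and, at every point
`x ∈ B` and every scale `r ∈ (0, r₀)`, the set of points of `B_r(x)` which either are outside
`B` or are moved at distance more than `(N+1)r` from `f(x)` has measure less than
`(χ_k/2)·Leb^k(B_r(x))`, then `f` is Lipschitz on `B` with constant at most
`max (2(N+1)) (2N/r₀)`. -/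
theorem lipschitz_of_egorov_bound {E : Type*} [MetricSpace E]
    (k : ℕ) (hk : 1 ≤ k) (e₀ : E) (N r₀ : ℝ) (hN : 0 ≤ N) (hr₀ : 0 < r₀)
    (B : Set (EuclideanSpace ℝ (Fin k))) (f : EuclideanSpace ℝ (Fin k) → E)
    (hbd : ∀ x ∈ B, dist (f x) e₀ ≤ N)
    (hsmall : ∀ x ∈ B, ∀ r ∈ Ioo (0 : ℝ) r₀,
      volume {y ∈ ball x r | y ∉ B ∨ (y ∈ B ∧ (N + 1) * r < dist (f y) (f x))} <
        ENNReal.ofReal (chi k hk / 2) * volume (ball x r)) :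
    ∀ x₁ ∈ B, ∀ x₂ ∈ B,
      dist (f x₁) (f x₂) ≤ max (2 * (N + 1)) (2 * N / r₀) * dist x₁ x₂ :=
  lipschitz_of_egorov_bound_general k hk e₀ N r₀ hr₀ B f hbd hsmall
end

section
/- Let E be a metric space, C ⊆ ℝ compact, and f : C → E a bi-Lipschitz map (i.e. there is L ≥ 1 with L^{-1}|s − t| ≤ d(f(s), f(t)) ≤ L|s − t| for all s, t ∈ C); set K := f(C). Let π : E → ℝ be Lipschitz, and let N be the set of points x ∈ K for which there exists a sequence (y_j) in K \ {x} with y_j → x and |π(y_j) − π(x)| / d(y_j, x) → 0. Then Leb^1(π(N)) = 0. -/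
open MeasureTheory Filter Metric Set Topology
open scoped NNReal

/-!
Extend `π ∘ f` from `C` to a Lipschitz function `G : ℝ → ℝ`. If `f s` is a degenerate point
and `G` is differentiable at `s`, then pulling the degenerating sequence back to `C` (the lower
bi-Lipschitz bound makes it converge to `s`) produces difference quotients of `G` at `s` that tend
to `0`, so `G'(s) = 0`. Hence `π(N)` lies in the image under `G` of the set where `G` is either not
differentiable or has zero derivative; the first set is null by Rademacher's theorem and a
Lipschitz map preserves null sets, the second has a null image by Sard's lemma.
-/

def IsDegeneratePoint {E : Type*} [MetricSpace E] (K : Set E) (π : E → ℝ) (x : E) : Prop :=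
  ∃ u : ℕ → E, (∀ j, u j ∈ K \ {x}) ∧ Tendsto u atTop (𝓝 x) ∧
    Tendsto (fun j => |π (u j) - π x| / dist (u j) x) atTop (𝓝 0)

theorem LipschitzWith.volume_image_null {K : ℝ≥0} {G : ℝ → ℝ} (hG : LipschitzWith K G)
    {s : Set ℝ} (hs : volume s = 0) : volume (G '' s) = 0 := by
  have h := hG.hausdorffMeasure_image_le zero_le_one s
  rw [hausdorffMeasure_real, hs, mul_zero] at h
  exact le_antisymm h bot_le

theorem volume_image_setOf_hasDerivAt_zero (G : ℝ → ℝ) :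
    volume (G '' {s | HasDerivAt G 0 s}) = 0 := by
  refine addHaar_image_eq_zero_of_det_fderivWithin_eq_zero volume
    (f' := fun _ => 0) (fun s hs => ?_) (fun _ _ => by simp [ContinuousLinearMap.det])
  simpa using hs.hasFDerivAt.hasFDerivWithinAt

theorem LipschitzWith.volume_image_setOf_forall_hasDerivAt_eq_zero {K : ℝ≥0} {G : ℝ → ℝ}
    (hG : LipschitzWith K G) :
    volume (G '' {s | ∀ c, HasDerivAt G c s → c = 0}) = 0 := by
  have hnd : volume {s | ¬ DifferentiableAt ℝ G s} = 0 := ae_iff.1 hG.ae_differentiableAt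
  refine measure_mono_null ?_ (measure_union_null (hG.volume_image_null hnd)
    (volume_image_setOf_hasDerivAt_zero G))
  rintro _ ⟨s, hs, rfl⟩
  by_cases hd : DifferentiableAt ℝ G s
  · exact Or.inr ⟨s, (hs _ hd.hasDerivAt) ▸ hd.hasDerivAt, rfl⟩
  · exact Or.inl ⟨s, hd, rfl⟩

theorem HasDerivAt.eq_zero_of_tendsto_abs_slope {G : ℝ → ℝ} {c s : ℝ} (hG : HasDerivAt G c s)
    {t : ℕ → ℝ} (ht : Tendsto t atTop (𝓝[≠] s))
    (hslope : Tendsto (fun j => |slope G s (t j)|) atTop (𝓝 0)) : c = 0 := by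
  have hc : Tendsto (fun j => |slope G s (t j)|) atTop (𝓝 |c|) :=
    (continuous_abs.tendsto c).comp ((hasDerivAt_iff_tendsto_slope.1 hG).comp ht)
  exact abs_eq_zero.1 (tendsto_nhds_unique hc hslope)

section BiLipschitz

variable {E : Type*} [MetricSpace E] {C : Set ℝ} {f : ℝ → E}

theorem tendsto_nhdsNE_of_dist_le_mul_dist {K : ℝ≥0}
    (hlow : ∀ s ∈ C, ∀ t ∈ C, dist s t ≤ K * dist (f s) (f t)) {s : ℝ} (hs : s ∈ C)
    {t : ℕ → ℝ} (ht : ∀ j, t j ∈ C) (hne : ∀ j, f (t j) ≠ f s)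
    (hlim : Tendsto (fun j => f (t j)) atTop (𝓝 (f s))) : Tendsto t atTop (𝓝[≠] s) := by
  refine tendsto_nhdsWithin_iff.2 ⟨?_, Eventually.of_forall fun j h => hne j (congrArg f h)⟩
  rw [tendsto_iff_dist_tendsto_zero] at hlim ⊢
  exact squeeze_zero (fun j => dist_nonneg) (fun j => hlow (t j) (ht j) s hs)
    (by simpa using hlim.const_mul (K : ℝ))

theorem abs_slope_comp_le_mul_div_dist {L : ℝ≥0} (hf : LipschitzOnWith L f C) (π : E → ℝ)
    {s t : ℝ} (hs : s ∈ C) (ht : t ∈ C) :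
    |slope (fun r => π (f r)) s t| ≤ L * (|π (f t) - π (f s)| / dist (f t) (f s)) := by
  by_cases hft : f t = f s
  · -- both sides vanish, the right one through `x / 0 = 0`
    simp [slope_def_field, hft]
  have hd : 0 < dist (f t) (f s) := dist_pos.2 hft
  have hts : 0 < |t - s| := abs_pos.2 (sub_ne_zero.2 fun h => hft (congrArg f h))
  rw [slope_def_field, abs_div, mul_div_assoc', div_le_div_iff₀ hts hd]
  calc |π (f t) - π (f s)| * dist (f t) (f s)
      ≤ |π (f t) - π (f s)| * (L * |t - s|) := by
        gcongr
        simpa [Real.dist_eq] using hf.dist_le_mul t ht s hs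
    _ = L * |π (f t) - π (f s)| * |t - s| := by ring

theorem HasDerivAt.eq_zero_of_isDegeneratePoint {K L : ℝ≥0} (hf : LipschitzOnWith L f C)
    (hlow : ∀ s ∈ C, ∀ t ∈ C, dist s t ≤ K * dist (f s) (f t)) {π : E → ℝ} {G : ℝ → ℝ}
    (hG : EqOn (fun r => π (f r)) G C) {s c : ℝ} (hs : s ∈ C) (hc : HasDerivAt G c s)
    (hdeg : IsDegeneratePoint (f '' C) π (f s)) : c = 0 := by
  obtain ⟨u, hu, hlim, hquot⟩ := hdeg
  choose t ht hft using fun j => (hu j).1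
  obtain rfl : (fun j => f (t j)) = u := funext hft
  have hne : ∀ j, f (t j) ≠ f s := fun j => (hu j).2
  refine hc.eq_zero_of_tendsto_abs_slope (tendsto_nhdsNE_of_dist_le_mul_dist hlow hs ht hne hlim)
    (squeeze_zero (fun j => abs_nonneg _) (fun j => ?_) (by simpa using hquot.const_mul (L : ℝ)))
  have hslope : slope G s (t j) = slope (fun r => π (f r)) s (t j) := by
    simp only [slope_def_field, hG hs, hG (ht j)]
  exact hslope ▸ abs_slope_comp_le_mul_div_dist hf π hs (ht j)

end BiLipschitz

theorem image_of_degenerate_points_null_general {E : Type*} [MetricSpace E]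
    (C : Set ℝ)
    (f : ℝ → E) (L : NNReal) (hL : 1 ≤ L)
    (hbi : ∀ s ∈ C, ∀ t ∈ C,
      (L : ℝ)⁻¹ * |s - t| ≤ dist (f s) (f t) ∧ dist (f s) (f t) ≤ (L : ℝ) * |s - t|)
    (π : E → ℝ) (Lπ : NNReal) (hπ : LipschitzWith Lπ π) :
    volume (π '' {x ∈ f '' C | ∃ u : ℕ → E,
      (∀ j, u j ∈ (f '' C) \ {x}) ∧
      Tendsto u atTop (nhds x) ∧
      Tendsto (fun j => |π (u j) - π x| / dist (u j) x) atTop (nhds 0)}) = 0 := by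
  have hLpos : (0 : ℝ) < L := zero_lt_one.trans_le (by exact_mod_cast hL)
  have hf : LipschitzOnWith L f C := LipschitzOnWith.of_dist_le_mul fun s hs t ht => by
    simpa [Real.dist_eq] using (hbi s hs t ht).2
  have hlow : ∀ s ∈ C, ∀ t ∈ C, dist s t ≤ L * dist (f s) (f t) := fun s hs t ht => by
    rw [Real.dist_eq, ← inv_mul_le_iff₀ hLpos]
    exact (hbi s hs t ht).1
  obtain ⟨G, hG, hGeq⟩ := (hπ.comp_lipschitzOnWith hf).extend_real
  refine measure_mono_null ?_ hG.volume_image_setOf_forall_hasDerivAt_eq_zero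
  rintro _ ⟨_, ⟨⟨s, hs, rfl⟩, hdeg⟩, rfl⟩
  exact ⟨s, fun c hc => hc.eq_zero_of_isDegeneratePoint hf hlow hGeq hs hdeg, (hGeq hs).symm⟩

/-- let `C ⊆ ℝ` be compact, `f : C → E` bi-Lipschitz with constant `L ≥ 1`,
`K = f(C)`, and `π : E → ℝ` Lipschitz. Let `N` be the set of points `x ∈ K` admitting a
sequence `y_j ∈ K \ {x}` with `y_j → x` and `|π(y_j) − π(x)| / d(y_j, x) → 0`. Then
`Leb^1(π(N)) = 0`. -/
theorem image_of_degenerate_points_null {E : Type*} [MetricSpace E]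
    (C : Set ℝ) (hC : IsCompact C)
    (f : ℝ → E) (L : NNReal) (hL : 1 ≤ L)
    (hbi : ∀ s ∈ C, ∀ t ∈ C,
      (L : ℝ)⁻¹ * |s - t| ≤ dist (f s) (f t) ∧ dist (f s) (f t) ≤ (L : ℝ) * |s - t|)
    (π : E → ℝ) (Lπ : NNReal) (hπ : LipschitzWith Lπ π) :
    volume (π '' {x ∈ f '' C | ∃ u : ℕ → E,
      (∀ j, u j ∈ (f '' C) \ {x}) ∧
      Tendsto u atTop (nhds x) ∧
      Tendsto (fun j => |π (u j) - π x| / dist (u j) x) atTop (nhds 0)}) = 0 :=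
  image_of_degenerate_points_null_general C f L hL hbi π Lπ hπ
end

section
/- Let E be a set, and let n ≥ 1 and p ≥ 2 be integers. Let a, b : {1, …, n} → E (interpreting a_i and b_i as the starting point c_i(0) and the ending point c_i(a_i) of the i-th Lipschitz curve, so that the 1-current S = Σ_{i=1}^n c_{i♯}⟦χ_{[0,a_i]}⟧ has boundary ∂S = Σ_{i=1}^n (⟦b_i⟧ − ⟦a_i⟧)). Assume that for every point z ∈ E the integer card{i ∈ {1,…,n} : b_i = z} − card{i ∈ {1,…,n} : a_i = z} is divisible by p (i.e. ∂S ∈ p·I_0(E)). Then there exists a subset J ⊆ {1, …, n} such that for every z ∈ E one has card{i ∈ {1,…,n} : b_i = z} − card{i ∈ {1,…,n} : a_i = z} = p · (card{j ∈ J : b_j = z} − card{j ∈ J : a_j = z}) (i.e. the current S' = S − p·Σ_{j∈J} c_{j♯}⟦χ_{[0,a_j]}⟧ is a cycle). -/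
/-!
Write `∂w = ∑ᵢ wᵢ (δ_{bᵢ} − δ_{aᵢ})` for the boundary of the weighted family of edges
`aᵢ → bᵢ`. Starting from `w = 1`, we round `w` to a vector with entries in `{0, p}` without
changing `∂w`, keeping `0 ≤ w ≤ p` and `p ∣ ∂w`; then `J = {i | wᵢ = p}` works.

Call an edge fractional if `0 < wᵢ < p`. Modulo `p`, only fractional edges contribute to `∂w`,
so no vertex meets exactly one fractional non-loop edge. Hence the fractional edges contain a
loop, two parallel edges or a cycle, which carries a nonzero circulation `σ` with entries in
`{-1, 0, 1}`. The defect `∑ wᵢ (p − wᵢ) ≥ 0` takes values at `w + σ` and `w − σ` summing to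
twice its value at `w` minus `2 ∑ σᵢ²`, so one of the two strictly lowers it.
-/

open Finset Function SimpleGraph

namespace SimpleGraph

variable {V : Type*} {G : SimpleGraph V}

theorem Walk.sum_darts_sub {M : Type*} [AddCommGroup M] (f : V → M) {u v : V}
    (p : G.Walk u v) : (p.darts.map fun d => f d.snd - f d.fst).sum = f v - f u := by
  induction p with
  | nil => simp
  | cons h p ih => simp [ih]

theorem Walk.IsTrail.symm_notMem_darts {u v : V} {p : G.Walk u v} (hp : p.IsTrail)
    {d : G.Dart} (hd : d ∈ p.darts) : d.symm ∉ p.darts := fun hd' =>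
  d.symm_ne (List.inj_on_of_nodup_map hp.edges_nodup hd' hd d.edge_symm)

theorem not_isAcyclic_of_forall_adj_exists_adj_ne [Finite G.edgeSet] {x y : V} (hxy : G.Adj x y)
    (h : ∀ v w, G.Adj v w → ∃ w', G.Adj v w' ∧ w' ≠ w) : ¬G.IsAcyclic := by
  intro hacyc
  have : Nonempty V := ⟨x⟩
  obtain ⟨u, v, p, hp, hmax⟩ := Walk.exists_isPath_forall_isPath_length_le_length G
  have hnil : ¬p.Nil := fun hnil => by
    have h1 := hmax x y _ (Path.singleton hxy).2
    rw [Walk.length_eq_zero_iff.mpr hnil, Path.singleton_coe] at h1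
    simp at h1
  obtain ⟨w, hvw, hw⟩ := h v _ (p.adj_penultimate hnil).symm
  have hw' : w ∉ p.support := fun hws => hw (hacyc.eq_penultimate_of_adj_end hp hvw hws)
  have := hmax u w (p.concat hvw) (hp.concat hw' hvw)
  simp at this

end SimpleGraph

section EdgeGraph

variable {ι E : Type*}

def edgeGraph (a b : ι → E) : SimpleGraph E := fromEdgeSet (Set.range fun i => s(a i, b i))

variable {a b : ι → E}

theorem exists_eq_of_edgeGraph_adj {x y : E} (h : (edgeGraph a b).Adj x y) :
    ∃ i, s(a i, b i) = s(x, y) :=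
  ((fromEdgeSet_adj _).mp h).1

theorem edgeGraph_adj_of_eq (hloop : ∀ i, a i ≠ b i) {i : ι} {x y : E}
    (h : s(a i, b i) = s(x, y)) : (edgeGraph a b).Adj x y := by
  refine (fromEdgeSet_adj _).mpr ⟨⟨i, h⟩, fun hxy => hloop i ?_⟩
  rcases Sym2.eq_iff.mp h with ⟨rfl, rfl⟩ | ⟨rfl, rfl⟩
  exacts [hxy, hxy.symm]

instance [Finite ι] : Finite (edgeGraph a b).edgeSet := by
  rw [edgeGraph, edgeSet_fromEdgeSet]
  exact ((Set.finite_range _).sdiff).to_subtype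

theorem exists_isCycle_edgeGraph [Finite ι] [Nonempty ι] (hloop : ∀ i, a i ≠ b i)
    (hinj : Injective fun i => s(a i, b i))
    (hdeg : ∀ i z, (a i = z ∨ b i = z) → ∃ j ≠ i, a j = z ∨ b j = z) :
    ∃ v, ∃ c : (edgeGraph a b).Walk v v, c.IsCycle := by
  suffices ¬(edgeGraph a b).IsAcyclic by simpa [IsAcyclic] using this
  obtain ⟨i₀⟩ := ‹Nonempty ι›
  refine not_isAcyclic_of_forall_adj_exists_adj_ne (edgeGraph_adj_of_eq hloop (i := i₀) rfl)
    fun v w hvw => ?_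
  obtain ⟨i, hi⟩ := exists_eq_of_edgeGraph_adj hvw
  obtain ⟨j, hji, hj⟩ := hdeg i v <| by
    rcases Sym2.eq_iff.mp hi with ⟨h, -⟩ | ⟨-, h⟩ <;> simp [h]
  rcases hj with rfl | rfl
  · refine ⟨b j, edgeGraph_adj_of_eq hloop rfl, fun h => hji (hinj ?_)⟩
    change s(a j, b j) = s(a i, b i)
    rw [h, hi]
  · refine ⟨a j, edgeGraph_adj_of_eq hloop Sym2.eq_swap, fun h => hji (hinj ?_)⟩
    change s(a j, b j) = s(a i, b i)
    rw [h, hi, Sym2.eq_swap]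

end EdgeGraph

section ChainBoundary

variable {ι E : Type*} [DecidableEq E]

variable (a b : ι → E)

section

variable [Fintype ι]

def chainBoundary : (ι → ℤ) →ₗ[ℤ] E → ℤ :=
  Fintype.linearCombination ℤ fun i => Pi.single (b i) 1 - Pi.single (a i) 1

theorem chainBoundary_apply (w : ι → ℤ) (z : E) :
    chainBoundary a b w z =
      ∑ i, w i * ((if z = b i then 1 else 0) - (if z = a i then 1 else 0)) := by
  simp [chainBoundary, Fintype.linearCombination_apply, Finset.sum_apply, Pi.single_apply]

theorem chainBoundary_single [DecidableEq ι] (i : ι) (r : ℤ) :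
    chainBoundary a b (Pi.single i r) = r • (Pi.single (b i) 1 - Pi.single (a i) 1) :=
  Fintype.linearCombination_apply_single ..

theorem chainBoundary_indicator [DecidableEq ι] (J : Finset ι) (z : E) :
    chainBoundary a b (fun i => if i ∈ J then 1 else 0) z =
      (#(J.filter fun j => b j = z) : ℤ) - #(J.filter fun j => a j = z) := by
  simp [chainBoundary_apply, Finset.sum_ite_mem, sum_sub_distrib, Finset.sum_boole,
    eq_comm]

theorem chainBoundary_extend {κ : Type*} [Fintype κ] {f : κ → ι} (hf : Injective f)
    (σ : κ → ℤ) : chainBoundary a b (extend f σ 0) = chainBoundary (a ∘ f) (b ∘ f) σ := by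
  simp only [chainBoundary, Fintype.linearCombination_apply]
  refine (Fintype.sum_of_injective f hf _ _ (fun i hi => ?_) fun k => ?_).symm
  · rw [extend_apply' _ _ _ (by simpa using hi), Pi.zero_apply, zero_smul]
  · rw [hf.extend_apply, comp_apply, comp_apply]

end

def dartIndicator (d : E × E) : ι → ℤ :=
  fun i => (if (a i, b i) = d then 1 else 0) - (if (b i, a i) = d then 1 else 0)

theorem sum_dartIndicator_apply (S : Finset (E × E)) (i : ι) :
    (∑ d ∈ S, dartIndicator a b d) i =
      (if (a i, b i) ∈ S then 1 else 0) - (if (b i, a i) ∈ S then 1 else 0) := by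
  simp [dartIndicator, Finset.sum_apply, sum_sub_distrib]

variable [Fintype ι] {a b}

theorem chainBoundary_dartIndicator (hinj : Injective fun i => s(a i, b i))
    (hloop : ∀ i, a i ≠ b i) {i₀ : ι} {x y : E} (hi₀ : s(a i₀, b i₀) = s(x, y)) :
    chainBoundary a b (dartIndicator a b (x, y)) = Pi.single y 1 - Pi.single x 1 := by
  classical
  rw [chainBoundary, Fintype.linearCombination_apply,
    Finset.sum_eq_single i₀ (fun i _ hi => ?_) (by simp)]
  · rcases Sym2.eq_iff.mp hi₀ with ⟨rfl, rfl⟩ | ⟨rfl, rfl⟩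
    · simp [dartIndicator, (hloop i₀).symm]
    · simp [dartIndicator, hloop i₀]
  · have h1 : ¬(a i = x ∧ b i = y) := fun ⟨hx, hy⟩ => hi (hinj (by simp only [hx, hy, hi₀]))
    have h2 : ¬(b i = x ∧ a i = y) := fun ⟨hx, hy⟩ =>
      hi (hinj (by simp only [hx, hy, hi₀, Sym2.eq_swap]))
    simp [dartIndicator, h1, h2]

theorem exists_circulation_of_isCycle (hloop : ∀ i, a i ≠ b i)
    (hinj : Injective fun i => s(a i, b i)) {v : E} {c : (edgeGraph a b).Walk v v}
    (hc : c.IsCycle) : ∃ σ : ι → ℤ, σ ≠ 0 ∧ (∀ i, |σ i| ≤ 1) ∧ chainBoundary a b σ = 0 := by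
  classical
  let S := (c.darts.map Dart.toProd).toFinset
  have hmem : ∀ d : (edgeGraph a b).Dart, d.toProd ∈ S ↔ d ∈ c.darts := fun d => by
    simp [S, Dart.toProd_injective.eq_iff]
  refine ⟨∑ d ∈ S, dartIndicator a b d, ?_, fun i => ?_, ?_⟩
  · let d := c.firstDart hc.not_nil
    have hd : d ∈ c.darts := c.firstDart_mem_darts hc.not_nil
    have hsymm : d.symm.toProd ∉ S := by rw [hmem]; exact hc.isTrail.symm_notMem_darts hd
    obtain ⟨i, hi⟩ := exists_eq_of_edgeGraph_adj d.adj
    intro h0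
    have := congr_fun h0 i
    rw [sum_dartIndicator_apply] at this
    rcases Sym2.eq_iff.mp hi with ⟨h1, h2⟩ | ⟨h1, h2⟩
    · rw [show (a i, b i) = d.toProd from Prod.ext h1 h2,
        show (b i, a i) = d.symm.toProd from Prod.ext h2 h1,
        if_pos ((hmem d).mpr hd), if_neg hsymm] at this
      simp at this
    · rw [show (a i, b i) = d.symm.toProd from Prod.ext h1 h2,
        show (b i, a i) = d.toProd from Prod.ext h2 h1,
        if_pos ((hmem d).mpr hd), if_neg hsymm] at this
      simp at this
  · rw [sum_dartIndicator_apply]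
    split_ifs <;> norm_num
  · have hbd : ∀ d ∈ S,
        chainBoundary a b (dartIndicator a b d) = Pi.single d.2 1 - Pi.single d.1 1 := by
      intro d hd
      obtain ⟨d, -, rfl⟩ := List.mem_map.mp (List.mem_toFinset.mp hd)
      obtain ⟨i, hi⟩ := exists_eq_of_edgeGraph_adj d.adj
      exact chainBoundary_dartIndicator hinj hloop hi
    rw [map_sum, sum_congr rfl hbd, List.sum_toFinset _
      ((hc.isTrail.edges_nodup.of_map Dart.edge).map Dart.toProd_injective), List.map_map]
    exact (c.sum_darts_sub fun z => Pi.single z 1).trans (sub_self _)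

theorem exists_circulation [Nonempty ι]
    (hdeg : ∀ i, a i ≠ b i → ∀ z, (a i = z ∨ b i = z) → ∃ j ≠ i, a j = z ∨ b j = z) :
    ∃ σ : ι → ℤ, σ ≠ 0 ∧ (∀ i, |σ i| ≤ 1) ∧ chainBoundary a b σ = 0 := by
  classical
  by_cases hloop : ∃ i, a i = b i
  · obtain ⟨i, hi⟩ := hloop
    refine ⟨Pi.single i 1, by simp, fun k => ?_, by simp [chainBoundary_single, hi]⟩
    rcases eq_or_ne k i with rfl | hki <;> simp [*]
  push Not at hloop
  by_cases hinj : Injective fun i => s(a i, b i)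
  · obtain ⟨v, c, hc⟩ := exists_isCycle_edgeGraph hloop hinj fun i => hdeg i (hloop i)
    exact exists_circulation_of_isCycle hloop hinj hc
  obtain ⟨i, j, hij, hne⟩ : ∃ i j, s(a i, b i) = s(a j, b j) ∧ i ≠ j := by
    simpa [Injective] using hinj
  rcases Sym2.eq_iff.mp hij with ⟨h1, h2⟩ | ⟨h1, h2⟩
  · refine ⟨Pi.single i 1 - Pi.single j 1, fun h => by simpa [hne] using congr_fun h i,
      fun k => ?_, by simp [chainBoundary_single, h1, h2]⟩
    rcases eq_or_ne k i with rfl | hki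
    · simp [hne]
    · rcases eq_or_ne k j with rfl | hkj <;> simp [*]
  · refine ⟨Pi.single i 1 + Pi.single j 1, fun h => by simpa [hne] using congr_fun h i,
      fun k => ?_, by simp [chainBoundary_single, h1, h2]⟩
    rcases eq_or_ne k i with rfl | hki
    · simp [hne]
    · rcases eq_or_ne k j with rfl | hkj <;> simp [*]

variable {p : ℤ} {w : ι → ℤ}

theorem exists_other_fractional_of_dvd (hw : ∀ i, 0 ≤ w i ∧ w i ≤ p)
    (hdvd : ∀ z, p ∣ chainBoundary a b w z) {i : ι} (hi : 0 < w i ∧ w i < p)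
    (hloop : a i ≠ b i) {z : E} (hz : a i = z ∨ b i = z) :
    ∃ j ≠ i, (0 < w j ∧ w j < p) ∧ (a j = z ∨ b j = z) := by
  classical
  by_contra hnone
  have hrest : p ∣ ∑ j ∈ univ.erase i,
      w j * ((if z = b j then 1 else 0) - (if z = a j then 1 else 0)) := by
    refine dvd_sum fun j hj => ?_
    by_cases hjz : a j = z ∨ b j = z
    · have : w j = 0 ∨ w j = p := by
        have : ¬(0 < w j ∧ w j < p) := fun hj' => hnone ⟨j, ne_of_mem_erase hj, hj', hjz⟩
        have := hw j
        omega
      exact Dvd.dvd.mul_right (by rcases this with h | h <;> simp [h]) _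
    · push Not at hjz
      simp [Ne.symm hjz.1, Ne.symm hjz.2]
  have hwi : p ∣ w i := by
    have h := hdvd z
    rw [chainBoundary_apply, ← add_sum_erase _ _ (mem_univ i), dvd_add_left hrest] at h
    rcases hz with rfl | rfl
    · simpa [hloop] using h
    · simpa [Ne.symm hloop] using h
  exact absurd (Int.le_of_dvd hi.1 hwi) (not_le.mpr hi.2)

theorem exists_circulation_of_dvd (hw : ∀ i, 0 ≤ w i ∧ w i ≤ p)
    (hdvd : ∀ z, p ∣ chainBoundary a b w z) (hfrac : ∃ i, 0 < w i ∧ w i < p) :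
    ∃ σ : ι → ℤ, σ ≠ 0 ∧ (∀ i, |σ i| ≤ 1) ∧ (∀ i, σ i ≠ 0 → 0 < w i ∧ w i < p) ∧
      chainBoundary a b σ = 0 := by
  let T := {i // 0 < w i ∧ w i < p}
  obtain ⟨i₀, hi₀⟩ := hfrac
  have : Nonempty T := ⟨⟨i₀, hi₀⟩⟩
  obtain ⟨σ, hσ0, hσ1, hσ⟩ := exists_circulation (a := fun i : T => a i) (b := fun i => b i)
    fun i hloop z hz => by
      obtain ⟨j, hji, hj, hjz⟩ := exists_other_fractional_of_dvd hw hdvd i.2 hloop hz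
      exact ⟨⟨j, hj⟩, fun h => hji (congrArg Subtype.val h), hjz⟩
  have hext : ∀ j : T, extend Subtype.val σ 0 j = σ j := Subtype.val_injective.extend_apply _ _
  have hout : ∀ i, ¬(0 < w i ∧ w i < p) → extend Subtype.val σ 0 i = 0 := fun i hi =>
    extend_apply' _ _ _ fun ⟨j, hj⟩ => hi (hj ▸ j.2)
  refine ⟨extend Subtype.val σ 0, fun h => hσ0 (funext fun j => ?_), fun i => ?_,
    fun i hi => ?_, ?_⟩
  · simpa [hext] using congr_fun h j
  · by_cases hi : 0 < w i ∧ w i < p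
    · exact hext ⟨i, hi⟩ ▸ hσ1 ⟨i, hi⟩
    · simp [hout i hi]
  · by_contra h
    exact hi (hout i h)
  · rw [chainBoundary_extend _ _ Subtype.val_injective]
    exact hσ

end ChainBoundary

section Rounding

variable {ι : Type*} {p : ℤ} {w : ι → ℤ}

theorem bounds_add_of_abs_le_one {σ : ι → ℤ} (hw : ∀ i, 0 ≤ w i ∧ w i ≤ p)
    (hσ1 : ∀ i, |σ i| ≤ 1) (hsupp : ∀ i, σ i ≠ 0 → 0 < w i ∧ w i < p) (i : ι) :
    0 ≤ (w + σ) i ∧ (w + σ) i ≤ p := by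
  by_cases hσ : σ i = 0
  · simp [hσ, hw i]
  · have := abs_le.mp (hσ1 i)
    have := hsupp i hσ
    simp only [Pi.add_apply]
    omega

variable [Fintype ι]

def roundingDefect (p : ℤ) (w : ι → ℤ) : ℤ := ∑ i, w i * (p - w i)

theorem roundingDefect_nonneg (hw : ∀ i, 0 ≤ w i ∧ w i ≤ p) : 0 ≤ roundingDefect p w :=
  sum_nonneg fun i _ => mul_nonneg (hw i).1 (sub_nonneg.mpr (hw i).2)

theorem roundingDefect_add_add_roundingDefect_sub (p : ℤ) (w σ : ι → ℤ) :
    roundingDefect p (w + σ) + roundingDefect p (w - σ) =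
      2 * roundingDefect p w - 2 * ∑ i, σ i ^ 2 := by
  simp only [roundingDefect, Pi.add_apply, Pi.sub_apply, ← sum_add_distrib, mul_sum,
    ← sum_sub_distrib]
  exact sum_congr rfl fun i _ => by ring

variable {E : Type*} [DecidableEq E] {a b : ι → E}

theorem exists_chainBoundary_eq_of_dvd (hw : ∀ i, 0 ≤ w i ∧ w i ≤ p)
    (hdvd : ∀ z, p ∣ chainBoundary a b w z) :
    ∃ w' : ι → ℤ, (∀ i, w' i = 0 ∨ w' i = p) ∧ chainBoundary a b w' = chainBoundary a b w := by
  induction hN : (roundingDefect p w).toNat using Nat.strong_induction_on generalizing w with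
  | _ N ih =>
  by_cases hint : ∀ i, w i = 0 ∨ w i = p
  · exact ⟨w, hint, rfl⟩
  obtain ⟨σ, hσ0, hσ1, hsupp, hσ⟩ := exists_circulation_of_dvd hw hdvd <| by
    push Not at hint
    obtain ⟨i, h0, hp⟩ := hint
    have := hw i
    exact ⟨i, by omega, by omega⟩
  have hsq : 0 < ∑ i, σ i ^ 2 := by
    obtain ⟨i, hi⟩ := Function.ne_iff.mp hσ0
    exact sum_pos' (fun i _ => sq_nonneg _) ⟨i, mem_univ _, pow_two_pos_of_ne_zero hi⟩
  have key := roundingDefect_add_add_roundingDefect_sub p w σ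
  obtain ⟨w', hw', hlt, hbd⟩ : ∃ w', (∀ i, 0 ≤ w' i ∧ w' i ≤ p) ∧
      roundingDefect p w' < roundingDefect p w ∧ chainBoundary a b w' = chainBoundary a b w := by
    by_cases h : roundingDefect p (w + σ) < roundingDefect p w
    · exact ⟨w + σ, bounds_add_of_abs_le_one hw hσ1 hsupp, h, by rw [map_add, hσ, add_zero]⟩
    · refine ⟨w - σ, ?_, by linarith, by rw [map_sub, hσ, sub_zero]⟩
      rw [sub_eq_add_neg]
      exact bounds_add_of_abs_le_one hw (by simpa using hσ1) (by simpa using hsupp)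
  obtain ⟨w'', hw'', hbd'⟩ := ih _ (by have := roundingDefect_nonneg hw'; omega) hw'
    (hbd ▸ hdvd) rfl
  exact ⟨w'', hw'', hbd'.trans hbd⟩

end Rounding

theorem exists_subfamily_cycle_mod_p_general {E : Type*} [DecidableEq E]
    (n p : ℕ) (hp : 2 ≤ p) (a b : Fin n → E)
    (hdiv : ∀ z : E, (p : ℤ) ∣
      ((Finset.univ.filter fun i => b i = z).card : ℤ) -
        ((Finset.univ.filter fun i => a i = z).card : ℤ)) :
    ∃ J : Finset (Fin n), ∀ z : E,
      ((Finset.univ.filter fun i => b i = z).card : ℤ) -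
          ((Finset.univ.filter fun i => a i = z).card : ℤ) =
        (p : ℤ) * (((J.filter fun j => b j = z).card : ℤ) -
          ((J.filter fun j => a j = z).card : ℤ)) := by
  obtain ⟨w, hw, hbd⟩ := exists_chainBoundary_eq_of_dvd (a := a) (b := b) (p := p)
    (w := fun i => if i ∈ univ then 1 else 0) (fun i => by simp only [mem_univ, ite_true]; omega)
    (fun z => by rw [chainBoundary_indicator]; exact hdiv z)
  obtain ⟨J, hwJ⟩ : ∃ J : Finset (Fin n), w = (p : ℤ) • fun i => if i ∈ J then 1 else 0 :=
    ⟨univ.filter (w · = p), funext fun i => by rcases hw i with h | h <;> simp [h]⟩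
  refine ⟨J, fun z => ?_⟩
  rw [← chainBoundary_indicator, ← chainBoundary_indicator, ← hbd, hwJ, map_smul, Pi.smul_apply,
    smul_eq_mul]

/-- combinatorial content of the decomposition lemma for 1-cycles mod p:
given curves with starting points `a i` and ending points `b i`, if for every point `z`
the boundary multiplicity `#{i : b i = z} − #{i : a i = z}` is divisible by `p`, then there
is a subfamily `J` such that subtracting `p` times the curves indexed by `J` produces a
cycle, i.e. for every `z` the boundary multiplicity equals `p` times the corresponding
boundary multiplicity of the subfamily. -/
theorem exists_subfamily_cycle_mod_p {E : Type*} [DecidableEq E]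
    (n p : ℕ) (hn : 1 ≤ n) (hp : 2 ≤ p) (a b : Fin n → E)
    (hdiv : ∀ z : E, (p : ℤ) ∣
      ((Finset.univ.filter fun i => b i = z).card : ℤ) -
        ((Finset.univ.filter fun i => a i = z).card : ℤ)) :
    ∃ J : Finset (Fin n), ∀ z : E,
      ((Finset.univ.filter fun i => b i = z).card : ℤ) -
          ((Finset.univ.filter fun i => a i = z).card : ℤ) =
        (p : ℤ) * (((J.filter fun j => b j = z).card : ℤ) -
          ((J.filter fun j => a j = z).card : ℤ)) :=
  exists_subfamily_cycle_mod_p_general n p hp a b hdiv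
end

section
/- Let X be a measurable space and let {μ_i}_{i ∈ I} be a nonempty family of measures on X whose least upper bound σ := ⨆_{i ∈ I} μ_i in the lattice of measures satisfies σ(X) < ∞. Then there exists a countable subset J ⊆ I such that ⨆_{j ∈ J} μ_j = σ. -/
/-!
Among the countable subfamilies, pick one, `J`, whose supremum has maximal total mass: the
total masses are bounded, so a sequence of countable subfamilies approaches their supremum, and
its union is countable. Adding any `μ i` to `J` then leaves the finite total mass unchanged, and a
measure that dominates a finite measure with the same total mass equals it, so `μ i` is already
below the supremum over `J`.
-/

open MeasureTheory Set

theorem Monotone.exists_isMaxOn_setOf_countable {I α : Type*} [CompleteLinearOrder α]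
    [TopologicalSpace α] [OrderTopology α] [FirstCountableTopology α] {g : Set I → α}
    (hg : Monotone g) : ∃ J : Set I, J.Countable ∧ IsMaxOn g {K | K.Countable} J := by
  obtain ⟨u, -, hu, hmem⟩ := exists_seq_tendsto_sSup (S := g '' {K | K.Countable})
    ⟨g ∅, ∅, countable_empty, rfl⟩ (OrderTop.bddAbove _)
  choose K hK hKu using hmem
  refine ⟨⋃ n, K n, countable_iUnion hK, fun L hL => ?_⟩
  calc g L ≤ sSup (g '' {K | K.Countable}) := le_sSup ⟨L, hL, rfl⟩
    _ ≤ g (⋃ n, K n) := le_of_tendsto' hu fun n => hKu n ▸ hg (subset_iUnion K n)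

theorem exists_countable_subfamily_iSup_eq_general {X : Type*} [MeasurableSpace X]
    {I : Type*} (μ : I → Measure X)
    (hfin : (⨆ i, μ i) Set.univ < ⊤) :
    ∃ J : Set I, J.Countable ∧ (⨆ i ∈ J, μ i) = ⨆ i, μ i := by
  have hmono : Monotone fun K : Set I => (⨆ i ∈ K, μ i) univ :=
    fun K L hKL => Measure.le_iff'.1 (biSup_mono fun i hi => hKL hi) univ
  obtain ⟨J, hJ, hmax⟩ := hmono.exists_isMaxOn_setOf_countable
  have hle : (⨆ j ∈ J, μ j) ≤ ⨆ j, μ j := iSup₂_le fun j _ => le_iSup μ j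
  refine ⟨J, hJ, le_antisymm hle (iSup_le fun i => ?_)⟩
  have : IsFiniteMeasure (⨆ j ∈ J, μ j) := ⟨(Measure.le_iff'.1 hle univ).trans_lt hfin⟩
  have hinsert : (⨆ j ∈ J, μ j) = μ i ⊔ ⨆ j ∈ J, μ j := by
    refine Measure.eq_of_le_of_measure_univ_eq le_sup_right
      (le_antisymm (Measure.le_iff'.1 le_sup_right univ) ?_)
    rw [← iSup_insert]
    exact hmax (hJ.insert i)
  exact le_sup_left.trans hinsert.ge

/-- if a nonempty family of measures has a supremum (in the lattice of
measures) of finite total mass, then the supremum is attained along a countable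
subfamily. -/
theorem exists_countable_subfamily_iSup_eq {X : Type*} [MeasurableSpace X]
    {I : Type*} [Nonempty I] (μ : I → Measure X)
    (hfin : (⨆ i, μ i) Set.univ < ⊤) :
    ∃ J : Set I, J.Countable ∧ (⨆ i ∈ J, μ i) = ⨆ i, μ i :=
  exists_countable_subfamily_iSup_eq_general μ hfin
end

section
/- Let k ≥ 1 be an integer, R > 0, d > 0 and ε ∈ (0, d^k). Let g : (0, R) → [0, ∞) be nondecreasing and assume: (a) there exists a sequence r_j ↓ 0 with g(r_j) > ε·r_j^k for every j; (b) whenever 0 < a ≤ b < R are such that g(r) > ε·r^k for all r ∈ [a, b], then g(b)^{1/k} ≥ g(a)^{1/k} + d·(b − a). Then g(r) > ε·r^k for every r ∈ (0, R), and moreover g(r) ≥ d^k·r^k for every r ∈ (0, R); in particular, liminf_{r→0+} g(r)/r^k ≥ d^k. -/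
open Filter Set

/-- ODE-type comparison argument for density lower bounds: let `g` be
nondecreasing and nonnegative on `(0, R)`, suppose `g(r_j) > ε r_j^k` along a sequence
`r_j ↓ 0`, and suppose the isoperimetric differential inequality
`g(b)^{1/k} ≥ g(a)^{1/k} + d(b−a)` holds on every interval `[a,b] ⊆ (0,R)` on which
`g(r) > ε r^k`. Then `g(r) > ε r^k` and `g(r) ≥ d^k r^k` for every `r ∈ (0,R)`; in
particular `liminf_{r→0+} g(r)/r^k ≥ d^k`. -/
theorem density_lower_bound_ode (k : ℕ) (hk : 1 ≤ k) (R d ε : ℝ)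
    (hR : 0 < R) (hd : 0 < d) (hε : ε ∈ Ioo 0 (d ^ k))
    (g : ℝ → ℝ)
    (hg0 : ∀ r ∈ Ioo 0 R, 0 ≤ g r)
    (hmono : MonotoneOn g (Ioo 0 R))
    (ha : ∃ r : ℕ → ℝ, Antitone r ∧ (∀ j, r j ∈ Ioo 0 R ∧ ε * r j ^ k < g (r j)) ∧
      Tendsto r atTop (nhds 0))
    (hb : ∀ a b : ℝ, 0 < a → a ≤ b → b < R → (∀ s ∈ Icc a b, ε * s ^ k < g s) →
      g a ^ (1 / (k : ℝ)) + d * (b - a) ≤ g b ^ (1 / (k : ℝ))) :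
    (∀ r ∈ Ioo 0 R, ε * r ^ k < g r) ∧
      (∀ r ∈ Ioo 0 R, d ^ k * r ^ k ≤ g r) ∧
      ENNReal.ofReal (d ^ k) ≤
        liminf (fun r : ℝ => ENNReal.ofReal (g r / r ^ k)) (nhdsWithin 0 (Ioi 0)) := by
  obtain ⟨r, hr_anti, hr_prop, hr_tendsto⟩ := ha
  have hknat : (k : ℝ) ≠ 0 := Nat.cast_ne_zero.mpr (by omega)
  have hkne : k ≠ 0 := by omega
  have hone_div : (1 : ℝ) / (k : ℝ) = ((k : ℝ))⁻¹ := one_div _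
  set e : ℝ := ε ^ ((k : ℝ)⁻¹) with he_def
  have he_pos : 0 < e := Real.rpow_pos_of_pos hε.1 _
  have he_lt_d : e < d := by
    have h1 : ε ^ ((k : ℝ)⁻¹) < (d ^ k) ^ ((k : ℝ)⁻¹) :=
      Real.rpow_lt_rpow hε.1.le hε.2 (by positivity)
    rwa [Real.pow_rpow_inv_natCast hd.le hkne] at h1
  have he_pow : e ^ k = ε := Real.rpow_inv_natCast_pow hε.1.le hkne
  have hkinv : (0:ℝ) < ((k : ℝ))⁻¹ := by
    rw [inv_pos]; exact_mod_cast Nat.pos_of_ne_zero hkne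
  -- Part 1
  have key : ∀ x ∈ Ioo 0 R, ε * x ^ k < g x := by
    intro x hx
    obtain ⟨j, hj⟩ : ∃ j, r j < x := (hr_tendsto.eventually (gt_mem_nhds hx.1)).exists
    have haI := (hr_prop j).1
    have hag := (hr_prop j).2
    set a := r j with ha_def
    by_contra hcon
    push_neg at hcon
    set B : Set ℝ := {s | s ∈ Icc a x ∧ g s ≤ ε * s ^ k} with hB_def
    have hxB : x ∈ B := ⟨⟨hj.le, le_rfl⟩, hcon⟩
    have hBne : B.Nonempty := ⟨x, hxB⟩
    have hBbdd : BddBelow B := ⟨a, fun s hs => hs.1.1⟩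
    set b0 := sInf B with hb0_def
    have hb0_mem : b0 ∈ Icc a x :=
      ⟨le_csInf hBne fun s hs => hs.1.1, csInf_le hBbdd hxB⟩
    have hb0_Ioo : b0 ∈ Ioo 0 R :=
      ⟨lt_of_lt_of_le haI.1 hb0_mem.1, lt_of_le_of_lt hb0_mem.2 hx.2⟩
    -- Step A: g b0 ≤ ε b0 ^ k
    obtain ⟨u, -, hu_tend, hu_mem⟩ := exists_seq_tendsto_sInf hBne hBbdd
    have hstepA : g b0 ≤ ε * b0 ^ k := by
      have hle : ∀ n, g b0 ≤ ε * u n ^ k := by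
        intro n
        have hun : u n ∈ Ioo 0 R :=
          ⟨lt_of_lt_of_le haI.1 (hu_mem n).1.1, lt_of_le_of_lt (hu_mem n).1.2 hx.2⟩
        exact le_trans (hmono hb0_Ioo hun (csInf_le hBbdd (hu_mem n))) (hu_mem n).2
      have htend : Tendsto (fun n => ε * u n ^ k) atTop (nhds (ε * b0 ^ k)) := by
        exact (hu_tend.pow k).const_mul ε
      exact ge_of_tendsto' htend hle
    -- every s < b0 in [a, x] is "good"
    have hgood : ∀ s, a ≤ s → s < b0 → ε * s ^ k < g s := by
      intro s hs1 hs2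
      by_contra h
      push_neg at h
      exact absurd (csInf_le hBbdd ⟨⟨hs1, hs2.le.trans hb0_mem.2⟩, h⟩) (not_le.mpr hs2)
    -- b0 ≠ a
    have hab0 : a < b0 := by
      rcases eq_or_lt_of_le hb0_mem.1 with h | h
      · exact absurd (h ▸ hstepA) (not_le.mpr hag)
      · exact h
    -- choose t
    obtain ⟨t, ht_def⟩ : ∃ t : ℝ, t = a + e * (b0 - a) / d := ⟨_, rfl⟩
    have hta : a < t := by
      have h1 : 0 < e * (b0 - a) / d :=
        div_pos (mul_pos he_pos (sub_pos.mpr hab0)) hd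
      linarith
    have htb0 : t < b0 := by
      have h1 : e * (b0 - a) / d < b0 - a := by
        rw [div_lt_iff₀ hd]
        nlinarith [sub_pos.mpr hab0]
      linarith
    have hdt : d * (t - a) = e * (b0 - a) := by
      rw [ht_def]
      field_simp
      ring
    have htR : t < R := lt_trans htb0 hb0_Ioo.2
    have htI : t ∈ Ioo 0 R := ⟨lt_trans haI.1 hta, htR⟩
    have hhb := hb a t haI.1 hta.le htR (fun s hs => hgood s hs.1 (lt_of_le_of_lt hs.2 htb0))
    -- g a ^ (1/k) > e * a
    have hga : e * a < g a ^ (1 / (k : ℝ)) := by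
      have h1 : (ε * a ^ k) ^ ((k : ℝ)⁻¹) < g a ^ ((k : ℝ)⁻¹) :=
        Real.rpow_lt_rpow (mul_nonneg hε.1.le (pow_nonneg haI.1.le k)) hag hkinv
      have h2 : (ε * a ^ k) ^ ((k : ℝ)⁻¹) = e * a := by
        rw [Real.mul_rpow hε.1.le (pow_nonneg haI.1.le k),
          Real.pow_rpow_inv_natCast haI.1.le hkne]
      rw [hone_div]
      rwa [h2] at h1
    have hgt : e * b0 < g t ^ (1 / (k : ℝ)) := by
      calc e * b0 = e * a + e * (b0 - a) := by ring
        _ < g a ^ (1 / (k : ℝ)) + d * (t - a) := by rw [hdt]; linarith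
        _ ≤ g t ^ (1 / (k : ℝ)) := hhb
    have hmonot : g t ≤ g b0 := hmono htI hb0_Ioo htb0.le
    have hgb0 : e * b0 < g b0 ^ (1 / (k : ℝ)) :=
      lt_of_lt_of_le hgt (by rw [hone_div]; exact Real.rpow_le_rpow (hg0 t htI) hmonot (by positivity))
    -- raise to k
    have hfin : ε * b0 ^ k < g b0 := by
      have h1 : (e * b0) ^ k < (g b0 ^ (1 / (k : ℝ))) ^ k :=
        pow_lt_pow_left₀ hgb0 (mul_nonneg he_pos.le hb0_Ioo.1.le) hkne
      rw [hone_div, Real.rpow_inv_natCast_pow (hg0 b0 hb0_Ioo) hkne, mul_pow, he_pow] at h1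
      exact h1
    exact absurd hstepA (not_le.mpr hfin)
  have part2 : ∀ x ∈ Ioo 0 R, d ^ k * x ^ k ≤ g x := by
    intro x hx
    have hdx : d * x ≤ g x ^ (1 / (k : ℝ)) := by
      have hev : ∀ᶠ j in atTop, d * x - d * r j ≤ g x ^ (1 / (k : ℝ)) := by
        filter_upwards [hr_tendsto.eventually (gt_mem_nhds hx.1)] with j hj
        have haI := (hr_prop j).1
        have hhb := hb (r j) x haI.1 hj.le hx.2 (fun s hs =>
          key s ⟨lt_of_lt_of_le haI.1 hs.1, lt_of_le_of_lt hs.2 hx.2⟩)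
        have h0 : (0 : ℝ) ≤ g (r j) ^ (1 / (k : ℝ)) := Real.rpow_nonneg (hg0 _ haI) _
        nlinarith
      have htend : Tendsto (fun j => d * x - d * r j) atTop (nhds (d * x)) := by
        have := (hr_tendsto.const_mul d).const_sub (d * x)
        simpa using this
      exact le_of_tendsto htend hev
    have h1 : (d * x) ^ k ≤ (g x ^ (1 / (k : ℝ))) ^ k :=
      pow_le_pow_left₀ (mul_nonneg hd.le hx.1.le) hdx k
    rw [hone_div, Real.rpow_inv_natCast_pow (hg0 x hx) hkne, mul_pow] at h1
    exact h1
  refine ⟨key, part2, ?_⟩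
  refine le_liminf_of_le (by isBoundedDefault) ?_
  filter_upwards [Ioo_mem_nhdsGT_of_mem (show (0:ℝ) ∈ Ico 0 R from ⟨le_rfl, hR⟩)] with s hs
  apply ENNReal.ofReal_le_ofReal
  rw [le_div_iff₀ (pow_pos hs.1 k)]
  exact part2 s hs
end
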